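/- arXiv:1810.08632 — 6 statements merged into one kernel-verified Lean document; each statement's English description precedes it below -/
import Mathlib

section
/- A set I of pairs (i,j) with 1 ≤ i < j ≤ n+1 is the set of inversions of some permutation σ of {1,...,n+1} if and only if for all i < j < k: if (i,j) ∈ I and (j,k) ∈ I then (i,k) ∈ I, and if (i,j) ∉ I and (j,k) ∉ I then (i,k) ∉ I. -/
/-- A set `I` of pairs `(i,j)` with `i < j` is the inversion set of some permutation
iff it satisfies the "transitive and co-transitive" condition. -/
theorem stmt_0 (n : ℕ) (I : Set (Fin (n + 1) × Fin (n + 1)))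
    (hI : ∀ p ∈ I, p.1 < p.2) :
    (∃ σ : Equiv.Perm (Fin (n + 1)),
        I = {p : Fin (n + 1) × Fin (n + 1) | p.1 < p.2 ∧ σ p.2 < σ p.1}) ↔
      (∀ i j k : Fin (n + 1), i < j → j < k →
        (((i, j) ∈ I → (j, k) ∈ I → (i, k) ∈ I) ∧
          ((i, j) ∉ I → (j, k) ∉ I → (i, k) ∉ I))) := by
  constructor
  · rintro ⟨σ, rfl⟩ i j k hij hjk
    constructor
    · rintro ⟨_, h1⟩ ⟨_, h2⟩
      exact ⟨hij.trans hjk, h2.trans h1⟩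
    · rintro h1 h2 ⟨_, h4⟩
      have a1 : ¬ σ j < σ i := fun h => h1 ⟨hij, h⟩
      have a2 : ¬ σ k < σ j := fun h => h2 ⟨hjk, h⟩
      exact a1 (lt_of_le_of_lt (le_of_not_gt a2) h4)
  · intro H
    classical
    set r : Fin (n+1) → Fin (n+1) → Prop :=
      fun a b => (a < b ∧ (a, b) ∉ I) ∨ (b < a ∧ (b, a) ∈ I) with hr
    have rirr : ∀ a, ¬ r a a := by
      rintro a (⟨h, _⟩ | ⟨h, _⟩) <;> exact lt_irrefl a h
    have rasymm : ∀ a b, r a b → ¬ r b a := by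
      rintro a b (⟨h1, h2⟩ | ⟨h1, h2⟩) (⟨h3, h4⟩ | ⟨h3, h4⟩)
      · exact lt_asymm h1 h3
      · exact h2 h4
      · exact h4 h2
      · exact lt_asymm h1 h3
    have rtot : ∀ a b : Fin (n+1), a ≠ b → r a b ∨ r b a := by
      intro a b hab
      rcases lt_trichotomy a b with h | h | h
      · by_cases hm : (a, b) ∈ I
        · exact Or.inr (Or.inr ⟨h, hm⟩)
        · exact Or.inl (Or.inl ⟨h, hm⟩)
      · exact absurd h hab
      · by_cases hm : (b, a) ∈ I
        · exact Or.inl (Or.inr ⟨h, hm⟩)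
        · exact Or.inr (Or.inl ⟨h, hm⟩)
    have rtrans : ∀ a b c, r a b → r b c → r a c := by
      rintro a b c (⟨hab, h1⟩ | ⟨hba, h1⟩) (⟨hbc, h2⟩ | ⟨hcb, h2⟩)
      · exact Or.inl ⟨hab.trans hbc, (H a b c hab hbc).2 h1 h2⟩
      · rcases lt_trichotomy a c with h | h | h
        · exact Or.inl ⟨h, fun h3 => h1 ((H a c b h hcb).1 h3 h2)⟩
        · subst h; exact absurd h2 h1
        · refine Or.inr ⟨h, by_contra fun h3 => (H c a b h hab).2 h3 h1 h2⟩
      · rcases lt_trichotomy a c with h | h | h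
        · exact Or.inl ⟨h, fun h3 => h2 ((H b a c hba h).1 h1 h3)⟩
        · subst h; exact absurd h1 h2
        · refine Or.inr ⟨h, by_contra fun h3 => (H b c a hbc h).2 h2 h3 h1⟩
      · exact Or.inr ⟨hcb.trans hba, (H c b a hcb hba).1 h2 h1⟩
    -- rank function
    have hcard : ∀ a : Fin (n+1),
        (Finset.univ.filter (fun b => r b a)).card < n + 1 := by
      intro a
      have hsub : Finset.univ.filter (fun b => r b a) ⊆ Finset.univ.erase a := by
        intro c hc
        rw [Finset.mem_filter] at hc
        refine Finset.mem_erase.mpr ⟨fun h => rirr a (h ▸ hc.2), Finset.mem_univ _⟩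
      calc (Finset.univ.filter (fun b => r b a)).card
          ≤ (Finset.univ.erase a).card := Finset.card_le_card hsub
        _ = n := by simp [Finset.card_erase_of_mem]
        _ < n + 1 := Nat.lt_succ_self n
    let f : Fin (n+1) → Fin (n+1) :=
      fun a => ⟨(Finset.univ.filter (fun b => r b a)).card, hcard a⟩
    have hmono : ∀ a b, r a b → f a < f b := by
      intro a b hab
      have hsub : Finset.univ.filter (fun c => r c a) ⊆
          Finset.univ.filter (fun c => r c b) := by
        intro c hc
        rw [Finset.mem_filter] at hc ⊢
        exact ⟨Finset.mem_univ _, rtrans c a b hc.2 hab⟩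
      have hss : Finset.univ.filter (fun c => r c a) ⊂
          Finset.univ.filter (fun c => r c b) := by
        refine (Finset.ssubset_iff_of_subset hsub).mpr ⟨a, ?_, ?_⟩
        · exact Finset.mem_filter.mpr ⟨Finset.mem_univ _, hab⟩
        · intro h
          exact rirr a (Finset.mem_filter.mp h).2
      exact Finset.card_lt_card hss
    have hiff : ∀ a b, f a < f b ↔ r a b := by
      intro a b
      refine ⟨fun h => ?_, hmono a b⟩
      by_contra hc
      rcases eq_or_ne a b with rfl | hne
      · exact lt_irrefl _ h
      · rcases rtot a b hne with h' | h'
        · exact hc h'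
        · exact lt_asymm h (hmono b a h')
    have finj : Function.Injective f := by
      intro a b hfe
      by_contra hne
      rcases rtot a b hne with h' | h'
      · exact absurd hfe (ne_of_lt (hmono a b h'))
      · exact absurd hfe.symm (ne_of_lt (hmono b a h'))
    refine ⟨Equiv.ofBijective f (Finite.injective_iff_bijective.mp finj), ?_⟩
    ext ⟨a, b⟩
    simp only [Set.mem_setOf_eq, Equiv.ofBijective_apply]
    constructor
    · intro hmem
      have hab : a < b := hI _ hmem
      exact ⟨hab, (hiff b a).mpr (Or.inr ⟨hab, hmem⟩)⟩
    · rintro ⟨hab, hlt⟩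
      rcases (hiff b a).mp hlt with ⟨h1, _⟩ | ⟨_, h2⟩
      · exact absurd hab (lt_asymm h1)
      · exact h2
end

section
/- For any permutation σ of {1,...,n+1} and any i ∈ {1,...,n+1}: inv_i(σ) - inv_{σ(i)}(σ⁻¹) = σ(i) - i, where inv_i(σ) = |{j : i < j and σ(i) > σ(j)}|. -/
/-! With `S = {j | i < j}` and `T = {j | σ i < σ j}`, the inversions of `σ` at `i` form `S \ T`
and, transported by `σ`, the inversions of `σ⁻¹` at `σ i` form `T \ S`. Hence the difference of
the two counts is `#S - #T = (m - 1 - i) - (m - 1 - σ i)`. -/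

/-- `inv_i(σ) = |{j : i < j and σ(i) > σ(j)}|`. -/
def invAt {m : ℕ} (σ : Equiv.Perm (Fin m)) (i : Fin m) : ℕ :=
  (Finset.univ.filter (fun j : Fin m => i < j ∧ σ j < σ i)).card

open Finset

theorem Finset.card_sub_card_eq_card_sdiff_sub_card_sdiff {α : Type*} [DecidableEq α]
    (s t : Finset α) : (#s : ℤ) - #t = #(s \ t) - #(t \ s) := by
  have hs := card_sdiff_add_card_inter s t
  have ht := card_sdiff_add_card_inter t s
  rw [inter_comm] at ht
  omega

section

variable {m : ℕ} (σ : Equiv.Perm (Fin m)) (i : Fin m)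

theorem invAt_eq_card_Ioi_sdiff :
    invAt σ i = #(Ioi i \ ({j | σ i < σ j} : Finset (Fin m))) := by
  unfold invAt
  congr 1
  ext j
  simp only [mem_filter, mem_univ, true_and, mem_sdiff, mem_Ioi, not_lt]
  constructor
  · exact fun ⟨hij, hσ⟩ => ⟨hij, hσ.le⟩
  · exact fun ⟨hij, hσ⟩ => ⟨hij, hσ.lt_of_ne (σ.injective.ne hij.ne')⟩

theorem invAt_inv_apply_eq_card_sdiff_Ioi :
    invAt σ⁻¹ (σ i) = #(({j | σ i < σ j} : Finset (Fin m)) \ Ioi i) := by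
  unfold invAt
  refine (card_equiv σ fun j => ?_).symm
  simp only [mem_filter, mem_univ, true_and, mem_sdiff, mem_Ioi, not_lt,
    Equiv.Perm.inv_def, Equiv.symm_apply_apply]
  constructor
  · exact fun ⟨hσ, hj⟩ => ⟨hσ, hj.lt_of_ne (by rintro rfl; exact hσ.ne rfl)⟩
  · exact fun ⟨hσ, hj⟩ => ⟨hσ, hj.le⟩

theorem card_filter_apply_lt_apply : #{j | σ i < σ j} = m - 1 - σ i := by
  rw [← Fin.card_Ioi]
  exact card_equiv σ fun j => by simp

theorem invAt_sub_invAt_inv_apply :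
    (invAt σ i : ℤ) - invAt σ⁻¹ (σ i) = (σ i : ℕ) - (i : ℕ) := by
  rw [invAt_eq_card_Ioi_sdiff, invAt_inv_apply_eq_card_sdiff_Ioi,
    ← card_sub_card_eq_card_sdiff_sub_card_sdiff, Fin.card_Ioi, card_filter_apply_lt_apply]
  omega

end

/-- `inv_i(σ) - inv_{σ(i)}(σ⁻¹) = σ(i) - i` for every permutation `σ` and index `i`. -/
theorem stmt_6 (n : ℕ) (σ : Equiv.Perm (Fin (n + 1))) (i : Fin (n + 1)) :
    (invAt σ i : ℤ) - (invAt σ⁻¹ (σ i) : ℤ) = ((σ i : ℕ) : ℤ) - ((i : ℕ) : ℤ) :=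
  invAt_sub_invAt_inv_apply σ i
end

section
/- Let Π(acute(σ)) = Ṕ ∈ SO(n+1) for σ ∈ S_{n+1}. Then the nonzero entries of Ṕ are given by e_i^T Ṕ = (-1)^{inv_i(σ)} e_{σ(i)}^T, i.e., Ṕ_{ij} = (-1)^{inv_i(σ)} when j = σ(i) and 0 otherwise, where inv_i(σ) = |{j : i < j, σ(i) > σ(j)}|. -/
/-!
Each generator `Ṕ_k` is a signed permutation matrix: row `r` has its only nonzero entry in
column `a_k(r)`, and it is `-1` exactly for `r = k`. Hence `Ṕ` has row `i` supported in column
`σ(i)`, and only the sign needs tracking. If `σ = τ a_k` is reduced then `τ(k) < τ(k+1)`, and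
right multiplication by `a_k` adds the single inversion `(k, k+1)`: it raises `inv_k` by one
(this is the sign of `Ṕ_k` on row `k`) and otherwise just exchanges the values `inv_k` and
`inv_{k+1}`.
-/

/-- The number of inversions of a permutation. -/
def invNum {m : ℕ} (σ : Equiv.Perm (Fin m)) : ℕ :=
  (Finset.univ.filter (fun p : Fin m × Fin m => p.1 < p.2 ∧ σ p.2 < σ p.1)).card

/-- The adjacent transposition `a_k = (k, k+1)` in `S_{n+1}`. -/
def aPerm {n : ℕ} (k : Fin n) : Equiv.Perm (Fin (n + 1)) :=
  Equiv.swap k.castSucc k.succ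

/-- `l` is a reduced word for `σ` (the head of the list acts first, matching the
right-action convention `σ = a_{i₁}···a_{i_k}`). -/
def IsReducedWord {n : ℕ} (σ : Equiv.Perm (Fin (n + 1))) (l : List (Fin n)) : Prop :=
  σ = ((l.map aPerm).reverse).prod ∧ l.length = invNum σ

/-- `Ṕ_k ∈ SO(n+1)`: rotation by `π/2` in the `(e_k, e_{k+1})` plane:
`(Ṕ_k)_{k+1,k} = 1`, `(Ṕ_k)_{k,k+1} = -1`, `(Ṕ_k)_{jj} = 1` for `j ∉ {k,k+1}`. -/
def rotGen {n : ℕ} (k : Fin n) : Matrix (Fin (n + 1)) (Fin (n + 1)) ℝ :=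
  Matrix.of fun r c =>
    if r = k.succ ∧ c = k.castSucc then 1
    else if r = k.castSucc ∧ c = k.succ then -1
    else if r = c ∧ r ≠ k.castSucc ∧ r ≠ k.succ then 1
    else 0

/-- `Ṕ = Π(acute σ) = Ṕ_{i₁}···Ṕ_{i_k}` for a reduced word of `σ`. -/
def prodRot {n : ℕ} (l : List (Fin n)) : Matrix (Fin (n + 1)) (Fin (n + 1)) ℝ :=
  (l.map rotGen).prod

open Equiv Finset

section Inversions

variable {m : ℕ}

lemma invAt_one (i : Fin m) : invAt 1 i = 0 := by
  simp only [invAt, Perm.one_apply, card_eq_zero]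
  exact filter_false_of_mem fun j _ h => lt_asymm h.1 h.2

lemma invNum_eq_sum_invAt (σ : Perm (Fin m)) : invNum σ = ∑ i, invAt σ i := by
  simp only [invNum, invAt, card_filter, Fintype.sum_prod_type]

lemma invAt_mul (τ π : Perm (Fin m)) (i : Fin m) :
    invAt (τ * π) i = #{j | i < π.symm j ∧ τ j < τ (π i)} :=
  card_equiv π fun j => by rw [mem_filter, mem_filter]; simp

end Inversions

section AdjacentTransposition

variable {n : ℕ} (k : Fin n)

lemma castSucc_ne_succ : k.castSucc ≠ k.succ := Fin.castSucc_lt_succ.ne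

lemma aPerm_symm : (aPerm k).symm = aPerm k := symm_swap _ _

lemma aPerm_apply_castSucc : aPerm k k.castSucc = k.succ := swap_apply_left _ _

lemma aPerm_apply_succ : aPerm k k.succ = k.castSucc := swap_apply_right _ _

lemma aPerm_apply_aPerm (i : Fin (n + 1)) : aPerm k (aPerm k i) = i := swap_apply_self _ _ _

lemma aPerm_mul_self : aPerm k * aPerm k = 1 := swap_mul_self _ _

lemma lt_aPerm_iff_of_ne {i : Fin (n + 1)} (h₁ : i ≠ k.castSucc) (h₂ : i ≠ k.succ)
    (j : Fin (n + 1)) : i < aPerm k j ↔ i < j := by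
  simp only [aPerm, swap_apply_def]
  split_ifs <;>
    simp only [Fin.lt_def, Fin.ext_iff, Fin.val_succ, Fin.val_castSucc, ne_eq] at * <;> omega

lemma succ_lt_aPerm_iff (j : Fin (n + 1)) : k.succ < aPerm k j ↔ k.succ < j := by
  simp only [aPerm, swap_apply_def]
  split_ifs <;> simp only [Fin.lt_def, Fin.ext_iff, Fin.val_succ, Fin.val_castSucc] at * <;> omega

lemma castSucc_lt_aPerm_iff (j : Fin (n + 1)) :
    k.castSucc < aPerm k j ↔ j = k.castSucc ∨ k.succ < j := by
  simp only [aPerm, swap_apply_def]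
  split_ifs <;> simp only [Fin.lt_def, Fin.ext_iff, Fin.val_succ, Fin.val_castSucc] at * <;> omega

lemma invAt_mul_aPerm_apply {τ : Perm (Fin (n + 1))} (h : τ k.castSucc < τ k.succ)
    (i : Fin (n + 1)) :
    invAt (τ * aPerm k) (aPerm k i) = invAt τ i + if i = k.succ then 1 else 0 := by
  rw [invAt_mul, aPerm_symm, aPerm_apply_aPerm]
  by_cases hc : i = k.castSucc
  · subst hc
    rw [if_neg (castSucc_ne_succ k), add_zero, invAt, aPerm_apply_castSucc]
    refine congrArg card (filter_congr fun j _ => ?_)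
    rw [succ_lt_aPerm_iff, Fin.castSucc_lt_iff_succ_le, le_iff_eq_or_lt]
    constructor
    · exact fun ⟨hj, hτ⟩ => ⟨Or.inr hj, hτ⟩
    · rintro ⟨rfl | hj, hτ⟩
      · exact absurd hτ (lt_asymm h)
      · exact ⟨hj, hτ⟩
  by_cases hs : i = k.succ
  · subst hs
    have hk : k.castSucc ∉ ({j | k.succ < j ∧ τ j < τ k.succ} : Finset _) := by
      rw [mem_filter]
      exact fun hj => lt_asymm Fin.castSucc_lt_succ hj.2.1
    rw [if_pos rfl, invAt, ← card_insert_of_notMem hk, aPerm_apply_succ]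
    refine congrArg card (ext fun j => ?_)
    rw [mem_filter, mem_insert, mem_filter, castSucc_lt_aPerm_iff, or_and_right]
    simp only [mem_univ, true_and]
    exact or_congr_left ⟨And.left, fun hj => ⟨hj, by rw [hj]; exact h⟩⟩
  · rw [if_neg hs, add_zero, invAt, aPerm, swap_apply_of_ne_of_ne hc hs, ← aPerm]
    exact congrArg card (filter_congr fun j _ => by rw [lt_aPerm_iff_of_ne k hc hs])

lemma invNum_mul_aPerm_of_lt {τ : Perm (Fin (n + 1))} (h : τ k.castSucc < τ k.succ) :
    invNum (τ * aPerm k) = invNum τ + 1 := by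
  rw [invNum_eq_sum_invAt, invNum_eq_sum_invAt,
    ← Equiv.sum_comp (aPerm k) (invAt (τ * aPerm k))]
  simp only [invAt_mul_aPerm_apply k h, sum_add_distrib, sum_ite_eq', mem_univ, if_true]

lemma invNum_mul_aPerm_of_gt {τ : Perm (Fin (n + 1))} (h : τ k.succ < τ k.castSucc) :
    invNum (τ * aPerm k) + 1 = invNum τ := by
  have h' : (τ * aPerm k) k.castSucc < (τ * aPerm k) k.succ := by
    rwa [Perm.mul_apply, Perm.mul_apply, aPerm_apply_castSucc, aPerm_apply_succ]
  rw [← invNum_mul_aPerm_of_lt k h', mul_assoc, aPerm_mul_self, mul_one]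

lemma invNum_mul_aPerm_le (τ : Perm (Fin (n + 1))) : invNum (τ * aPerm k) ≤ invNum τ + 1 := by
  rcases lt_or_gt_of_ne (τ.injective.ne (castSucc_ne_succ k)) with h | h
  · exact (invNum_mul_aPerm_of_lt k h).le
  · have := invNum_mul_aPerm_of_gt k h
    omega

lemma rotGen_apply (r c : Fin (n + 1)) :
    rotGen k r c = if c = aPerm k r then (if r = k.castSucc then -1 else 1) else 0 := by
  simp only [rotGen, Matrix.of_apply, aPerm, swap_apply_def]
  split_ifs <;> simp only [Fin.ext_iff, Fin.val_succ, Fin.val_castSucc, not_and, ne_eq] at * <;>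
    first | rfl | omega

lemma rotGen_mul_apply (M : Matrix (Fin (n + 1)) (Fin (n + 1)) ℝ) (i j : Fin (n + 1)) :
    (rotGen k * M) i j = (if i = k.castSucc then -1 else 1) * M (aPerm k i) j := by
  simp only [Matrix.mul_apply, rotGen_apply, ite_mul, zero_mul, sum_ite_eq', mem_univ, if_true]

lemma neg_one_pow_invAt_mul_aPerm {τ : Perm (Fin (n + 1))} (h : τ k.castSucc < τ k.succ)
    (i : Fin (n + 1)) : (-1 : ℝ) ^ invAt (τ * aPerm k) i =
      (if i = k.castSucc then -1 else 1) * (-1) ^ invAt τ (aPerm k i) := by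
  obtain ⟨i, rfl⟩ := (aPerm k).surjective i
  have hi : aPerm k i = k.castSucc ↔ i = k.succ := by
    rw [← aPerm_apply_succ, (aPerm k).apply_eq_iff_eq]
  rw [invAt_mul_aPerm_apply k h, aPerm_apply_aPerm, pow_add]
  simp only [hi]
  split_ifs <;> ring

end AdjacentTransposition

lemma prod_map_aPerm_cons {n : ℕ} (k : Fin n) (t : List (Fin n)) :
    ((k :: t).map aPerm).reverse.prod = (t.map aPerm).reverse.prod * aPerm k := by
  simp

lemma invNum_prod_map_aPerm_le {n : ℕ} (l : List (Fin n)) :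
    invNum (l.map aPerm).reverse.prod ≤ l.length := by
  induction l with
  | nil => simp [invNum_eq_sum_invAt, invAt_one]
  | cons k t ih =>
    rw [prod_map_aPerm_cons, List.length_cons]
    exact (invNum_mul_aPerm_le k _).trans (by omega)

lemma IsReducedWord.exists_mul_aPerm_of_cons {n : ℕ} {σ : Perm (Fin (n + 1))} {k : Fin n}
    {t : List (Fin n)} (h : IsReducedWord σ (k :: t)) :
    ∃ τ, σ = τ * aPerm k ∧ IsReducedWord τ t ∧ τ k.castSucc < τ k.succ := by
  obtain ⟨hσ, hlen⟩ := h
  rw [prod_map_aPerm_cons] at hσ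
  set τ := (t.map aPerm).reverse.prod
  have hτ : invNum τ ≤ t.length := invNum_prod_map_aPerm_le t
  rw [List.length_cons, hσ] at hlen
  rcases lt_or_gt_of_ne (τ.injective.ne (castSucc_ne_succ k)) with hlt | hgt
  · have := invNum_mul_aPerm_of_lt k hlt
    exact ⟨τ, hσ, ⟨rfl, by omega⟩, hlt⟩
  · have := invNum_mul_aPerm_of_gt k hgt
    omega

/-- The entries of `Ṕ = Π(acute σ)`: `Ṕ_{ij} = (-1)^{inv_i(σ)}` if `j = σ(i)`,
and `0` otherwise. -/
theorem stmt_12 (n : ℕ) (σ : Equiv.Perm (Fin (n + 1))) (l : List (Fin n))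
    (hl : IsReducedWord σ l) :
    ∀ i j : Fin (n + 1),
      prodRot l i j = if j = σ i then (-1 : ℝ) ^ invAt σ i else 0 := by
  induction l generalizing σ with
  | nil =>
    obtain rfl : σ = 1 := hl.1
    intro i j
    simp [prodRot, Matrix.one_apply, invAt_one, eq_comm]
  | cons k t ih =>
    obtain ⟨τ, rfl, hτ, hlt⟩ := hl.exists_mul_aPerm_of_cons
    intro i j
    rw [prodRot, List.map_cons, List.prod_cons, rotGen_mul_apply, ← prodRot, ih τ hτ,
      neg_one_pow_invAt_mul_aPerm k hlt, Perm.mul_apply, mul_ite, mul_zero]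
end

section
/- Let Lo¹ denote the group of (n+1)×(n+1) real lower triangular matrices with all diagonal entries 1, and let Pos_η be the set of totally positive elements of Lo¹ (all minors det(L_{I₀,I₁}) > 0 with I₀ ≥ I₁ componentwise after sorting). If L₀ ∈ Pos_η and L₁ is in the closure of Pos_η (all such minors ≥ 0), then both L₀L₁ and L₁L₀ belong to Pos_η. If L₀ and L₁ both lie in the closure of Pos_η, then L₀L₁ lies in the closure of Pos_η. -/
/-- The `k×k` minor of `M` with rows the (sorted) elements of `I₀` and columns the
(sorted) elements of `I₁`. -/
noncomputable def minorDet {n : ℕ} (M : Matrix (Fin n) (Fin n) ℝ) {k : ℕ}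
    (I₀ I₁ : Finset (Fin n)) (h₀ : I₀.card = k) (h₁ : I₁.card = k) : ℝ :=
  Matrix.det
    (Matrix.of fun a b : Fin k =>
      M ((I₀.orderIsoOfFin h₀ a : Fin n)) ((I₁.orderIsoOfFin h₁ b : Fin n)))

/-- `I₀ ≥ I₁` componentwise after sorting. -/
def Dominates {n k : ℕ} (I₀ I₁ : Finset (Fin n)) (h₀ : I₀.card = k)
    (h₁ : I₁.card = k) : Prop :=
  ∀ r : Fin k, (I₁.orderIsoOfFin h₁ r : Fin n) ≤ (I₀.orderIsoOfFin h₀ r : Fin n)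

/-- `M` is totally positive (`M ∈ Pos_η`): every minor `det M_{I₀,I₁}` with `I₀ ≥ I₁`
is strictly positive. -/
def TotPos {n : ℕ} (M : Matrix (Fin n) (Fin n) ℝ) : Prop :=
  ∀ (k : ℕ) (I₀ I₁ : Finset (Fin n)) (h₀ : I₀.card = k) (h₁ : I₁.card = k),
    Dominates I₀ I₁ h₀ h₁ → 0 < minorDet M I₀ I₁ h₀ h₁

/-- `M` lies in the closure of `Pos_η`: every minor `det M_{I₀,I₁}` with `I₀ ≥ I₁`
is nonnegative. -/
def TotNonneg {n : ℕ} (M : Matrix (Fin n) (Fin n) ℝ) : Prop :=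
  ∀ (k : ℕ) (I₀ I₁ : Finset (Fin n)) (h₀ : I₀.card = k) (h₁ : I₁.card = k),
    Dominates I₀ I₁ h₀ h₁ → 0 ≤ minorDet M I₀ I₁ h₀ h₁

/-- `M ∈ Lo¹`: lower triangular with unit diagonal. -/
def UnitLower {n : ℕ} (M : Matrix (Fin n) (Fin n) ℝ) : Prop :=
  (∀ i, M i i = 1) ∧ ∀ i j, i < j → M i j = 0

open Finset Matrix Equiv

namespace CBaux

variable {N k : ℕ}

/-- The increasing enumeration of a `k`-element subset. -/
noncomputable def emb (J : Finset (Fin N)) (h : J.card = k) : Fin k → Fin N :=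
  fun b => (J.orderIsoOfFin h b : Fin N)

lemma emb_strictMono (J : Finset (Fin N)) (h : J.card = k) : StrictMono (emb J h) := by
  intro a b hab
  exact Subtype.coe_lt_coe.2 ((J.orderIsoOfFin h).strictMono hab)

lemma emb_injective (J : Finset (Fin N)) (h : J.card = k) : Function.Injective (emb J h) :=
  (emb_strictMono J h).injective

lemma emb_image (J : Finset (Fin N)) (h : J.card = k) :
    image (emb J h) univ = J := by
  ext x
  simp only [mem_image, mem_univ, true_and]
  constructor
  · rintro ⟨a, rfl⟩; exact (J.orderIsoOfFin h a).2
  · intro hx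
    exact ⟨(J.orderIsoOfFin h).symm ⟨x, hx⟩, by simp [emb]⟩

lemma minorDet_eq {n k : ℕ} (M : Matrix (Fin n) (Fin n) ℝ)
    (I₀ I₁ : Finset (Fin n)) (h₀ : I₀.card = k) (h₁ : I₁.card = k) :
    minorDet M I₀ I₁ h₀ h₁ = det (M.submatrix (emb I₀ h₀) (emb I₁ h₁)) := rfl

/-- Expansion of `det (A * B)` over all column selections. -/
lemma det_mul_expand (A : Matrix (Fin k) (Fin N) ℝ) (B : Matrix (Fin N) (Fin k) ℝ) :
    det (A * B) = ∑ p : Fin k → Fin N, det (A.submatrix id p) * ∏ i, B (p i) i := by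
  have h1 : det (A * B)
      = ∑ σ : Perm (Fin k), ∑ p : Fin k → Fin N,
          Perm.sign σ * ∏ i, A (σ i) (p i) * B (p i) i := by
    rw [det_apply']
    congr 1
    ext σ
    rw [← Finset.mul_sum]
    congr 1
    simp only [mul_apply]
    rw [Finset.prod_univ_sum]
    simp [Fintype.piFinset_univ]
  rw [h1, Finset.sum_comm]
  congr 1
  ext p
  rw [det_apply', Finset.sum_mul]
  congr 1
  ext σ
  rw [Finset.prod_mul_distrib]
  simp only [submatrix_apply, id_eq]
  ring

/-- Inner step: sum over injective maps with a prescribed image equals sum over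
permutations. -/
lemma sum_over_image (J : Finset (Fin N)) (hJ : J.card = k)
    (F : (Fin k → Fin N) → ℝ) :
    ∑ p ∈ ((univ : Finset (Fin k → Fin N)).filter Function.Injective).filter
        (fun p => Finset.image p univ = J), F p
      = ∑ σ : Perm (Fin k), F (emb J hJ ∘ σ) := by
  refine (Finset.sum_bij (fun (σ : Perm (Fin k)) _ => emb J hJ ∘ σ) ?_ ?_ ?_ ?_).symm
  · intro σ _
    refine mem_filter.2 ⟨mem_filter.2 ⟨mem_univ _, (emb_injective J hJ).comp σ.injective⟩, ?_⟩
    show Finset.image (emb J hJ ∘ ⇑σ) univ = J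
    rw [← Finset.image_image]
    rw [Finset.image_univ_equiv]
    exact emb_image J hJ
  · intro σ _ σ' _ h
    exact Equiv.ext fun a => emb_injective J hJ (congrFun h a)
  · intro p hp
    obtain ⟨hp1, himg⟩ := mem_filter.1 hp
    have hpinj : Function.Injective p := (mem_filter.1 hp1).2
    have hmem : ∀ a, p a ∈ J := by
      intro a; rw [← himg]; exact Finset.mem_image_of_mem _ (mem_univ a)
    refine ⟨Equiv.ofBijective (fun a => (J.orderIsoOfFin hJ).symm ⟨p a, hmem a⟩)
      (Finite.injective_iff_bijective.1 (fun a b hab => hpinj (by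
        have := congrArg (fun x => ((J.orderIsoOfFin hJ) x : Fin N)) hab
        simpa using this))), mem_univ _, ?_⟩
    funext a
    simp [emb, Equiv.ofBijective_apply]
  · intro σ _; rfl

/-- Cauchy–Binet. -/
theorem cauchyBinet (A : Matrix (Fin k) (Fin N) ℝ) (B : Matrix (Fin N) (Fin k) ℝ) :
    det (A * B) = ∑ J ∈ ((univ : Finset (Fin N)).powersetCard k).attach,
      det (A.submatrix id (emb J.1 (mem_powersetCard_univ.1 J.2)))
        * det (B.submatrix (emb J.1 (mem_powersetCard_univ.1 J.2)) id) := by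
  rw [det_mul_expand]
  have hstep : ∑ p : Fin k → Fin N, det (A.submatrix id p) * ∏ i, B (p i) i
      = ∑ p ∈ (univ : Finset (Fin k → Fin N)).filter Function.Injective,
          det (A.submatrix id p) * ∏ i, B (p i) i := by
    refine (Finset.sum_subset (filter_subset _ _) fun p _ hp => ?_).symm
    have hpinj : ¬ Function.Injective p := by simpa using hp
    rw [Function.Injective] at hpinj
    push_neg at hpinj
    obtain ⟨a, b, hab, hne⟩ := hpinj
    have : det (A.submatrix id p) = 0 := by
      apply det_zero_of_column_eq hne
      intro i; simp [hab]
    rw [this, zero_mul]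
  rw [hstep]
  set F : (Fin k → Fin N) → ℝ := fun p => det (A.submatrix id p) * ∏ i, B (p i) i with hF
  have hmaps : ∀ p ∈ (univ : Finset (Fin k → Fin N)).filter Function.Injective,
      Finset.image p univ ∈ (univ : Finset (Fin N)).powersetCard k := by
    intro p hp
    refine mem_powersetCard_univ.2 ?_
    rw [Finset.card_image_of_injective _ (mem_filter.1 hp).2, card_univ, Fintype.card_fin]
  rw [← Finset.sum_fiberwise_of_maps_to hmaps F]
  rw [← Finset.sum_attach ((univ : Finset (Fin N)).powersetCard k)
    (fun J => ∑ p ∈ ((univ : Finset (Fin k → Fin N)).filter Function.Injective).filter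
        (fun p => Finset.image p univ = J), F p)]
  refine Finset.sum_congr rfl fun J _ => ?_
  have hJ : J.1.card = k := mem_powersetCard_univ.1 J.2
  rw [sum_over_image J.1 hJ F]
  have key : ∀ σ : Perm (Fin k),
      F (emb J.1 hJ ∘ σ) = (Perm.sign σ : ℝ) * det (A.submatrix id (emb J.1 hJ))
        * ∏ i, (B.submatrix (emb J.1 hJ) id) (σ i) i := by
    intro σ
    have h1 : A.submatrix id (emb J.1 hJ ∘ σ)
        = (A.submatrix id (emb J.1 hJ)).submatrix id σ := rfl
    rw [hF]
    simp only [h1, det_permute']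
    simp only [submatrix_apply, id_eq, Function.comp_apply]
    try push_cast
    try ring
  rw [Finset.sum_congr rfl fun σ _ => key σ]
  rw [det_apply' (B.submatrix (emb J.1 hJ) id), Finset.mul_sum]
  congr 1
  ext σ
  ring

/-- Minor of the product expands by Cauchy–Binet. -/
lemma minorDet_mul {n k : ℕ} (L₀ L₁ : Matrix (Fin n) (Fin n) ℝ)
    (I₀ I₁ : Finset (Fin n)) (h₀ : I₀.card = k) (h₁ : I₁.card = k) :
    minorDet (L₀ * L₁) I₀ I₁ h₀ h₁
      = ∑ J ∈ ((univ : Finset (Fin n)).powersetCard k).attach,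
          minorDet L₀ I₀ J.1 h₀ (mem_powersetCard_univ.1 J.2)
            * minorDet L₁ J.1 I₁ (mem_powersetCard_univ.1 J.2) h₁ := by
  have hmat : ((L₀ * L₁).submatrix (emb I₀ h₀) (emb I₁ h₁))
      = (L₀.submatrix (emb I₀ h₀) id) * (L₁.submatrix id (emb I₁ h₁)) := by
    ext a b
    simp [Matrix.mul_apply]
  rw [minorDet_eq, hmat, cauchyBinet]
  exact Finset.sum_congr rfl fun J _ => rfl

/-- Minors with non-dominating index sets of a unit lower triangular matrix vanish. -/
lemma minorDet_eq_zero_of_not_dominates {n k : ℕ} {M : Matrix (Fin n) (Fin n) ℝ}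
    (hM : UnitLower M) {I₀ I₁ : Finset (Fin n)} (h₀ : I₀.card = k) (h₁ : I₁.card = k)
    (h : ¬ Dominates I₀ I₁ h₀ h₁) : minorDet M I₀ I₁ h₀ h₁ = 0 := by
  rw [Dominates] at h
  push_neg at h
  obtain ⟨r, hr⟩ := h
  rw [minorDet, det_apply']
  refine Finset.sum_eq_zero fun σ _ => ?_
  have hex : ∃ i : Fin k, r ≤ i ∧ σ i ≤ r := by
    by_contra hcon
    push_neg at hcon
    have hsub : (Finset.Ici r).image σ ⊆ Finset.Ioi r := by
      intro x hx
      obtain ⟨i, hi, rfl⟩ := Finset.mem_image.1 hx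
      exact Finset.mem_Ioi.2 (hcon i (Finset.mem_Ici.1 hi))
    have h1 : (Finset.Ici r).card ≤ (Finset.Ioi r).card := by
      calc (Finset.Ici r).card = ((Finset.Ici r).image σ).card :=
            (Finset.card_image_of_injective _ σ.injective).symm
        _ ≤ _ := Finset.card_le_card hsub
    have h2 : (Finset.Ioi r).card < (Finset.Ici r).card := by
      refine Finset.card_lt_card ?_
      refine ⟨fun x hx => Finset.mem_Ici.2 (le_of_lt (Finset.mem_Ioi.1 hx)), ?_⟩
      intro hc
      have := hc (Finset.mem_Ici.2 (le_refl r))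
      simp at this
    omega
  obtain ⟨i, hri, hσi⟩ := hex
  have hzero : M (I₀.orderIsoOfFin h₀ (σ i) : Fin n) (I₁.orderIsoOfFin h₁ i : Fin n) = 0 := by
    apply hM.2
    calc ((I₀.orderIsoOfFin h₀ (σ i) : Fin n))
        ≤ (I₀.orderIsoOfFin h₀ r : Fin n) := (emb_strictMono I₀ h₀).monotone hσi
      _ < (I₁.orderIsoOfFin h₁ r : Fin n) := hr
      _ ≤ (I₁.orderIsoOfFin h₁ i : Fin n) := (emb_strictMono I₁ h₁).monotone hri
  rw [Finset.prod_eq_zero (Finset.mem_univ i), mul_zero]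
  exact hzero

/-- Principal minors of a unit lower triangular matrix are `1`. -/
lemma minorDet_self {n k : ℕ} {M : Matrix (Fin n) (Fin n) ℝ} (hM : UnitLower M)
    (I : Finset (Fin n)) (h : I.card = k) : minorDet M I I h h = 1 := by
  rw [minorDet_eq]
  have htri : (M.submatrix (emb I h) (emb I h)).BlockTriangular OrderDual.toDual := by
    intro a b hab
    exact hM.2 _ _ (emb_strictMono I h (by exact hab))
  rw [det_of_lowerTriangular _ htri]
  simp [emb, hM.1]

lemma term_nonneg {n k : ℕ} {A B : Matrix (Fin n) (Fin n) ℝ}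
    (hA : UnitLower A) (hB : UnitLower B) (hA' : TotNonneg A) (hB' : TotNonneg B)
    {I₀ I₁ : Finset (Fin n)} (h₀ : I₀.card = k) (h₁ : I₁.card = k)
    (J : Finset (Fin n)) (hJ : J.card = k) :
    0 ≤ minorDet A I₀ J h₀ hJ * minorDet B J I₁ hJ h₁ := by
  by_cases hd0 : Dominates I₀ J h₀ hJ
  · by_cases hd1 : Dominates J I₁ hJ h₁
    · exact mul_nonneg (hA' k _ _ _ _ hd0) (hB' k _ _ _ _ hd1)
    · rw [minorDet_eq_zero_of_not_dominates hB hJ h₁ hd1, mul_zero]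
  · rw [minorDet_eq_zero_of_not_dominates hA h₀ hJ hd0, zero_mul]

lemma mul_totNonneg {n : ℕ} {A B : Matrix (Fin n) (Fin n) ℝ}
    (hA : UnitLower A) (hB : UnitLower B) (hA' : TotNonneg A) (hB' : TotNonneg B) :
    TotNonneg (A * B) := by
  intro k I₀ I₁ h₀ h₁ _
  rw [minorDet_mul]
  exact Finset.sum_nonneg fun J _ => term_nonneg hA hB hA' hB' h₀ h₁ J.1 _

lemma totPos_totNonneg {n : ℕ} {A : Matrix (Fin n) (Fin n) ℝ} (h : TotPos A) :
    TotNonneg A := fun k I₀ I₁ h₀ h₁ hd => le_of_lt (h k I₀ I₁ h₀ h₁ hd)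

lemma mul_totPos_left {n : ℕ} {A B : Matrix (Fin n) (Fin n) ℝ}
    (hA : UnitLower A) (hB : UnitLower B) (hA' : TotPos A) (hB' : TotNonneg B) :
    TotPos (A * B) := by
  intro k I₀ I₁ h₀ h₁ hdom
  rw [minorDet_mul]
  refine Finset.sum_pos' (fun J _ => term_nonneg hA hB (totPos_totNonneg hA') hB' h₀ h₁ J.1 _)
    ⟨⟨I₁, mem_powersetCard_univ.2 h₁⟩, Finset.mem_attach _ _, ?_⟩
  have h2 : minorDet B I₁ I₁ (mem_powersetCard_univ.1 (mem_powersetCard_univ.2 h₁)) h₁ = 1 :=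
    minorDet_self hB I₁ h₁
  rw [h2, mul_one]
  exact hA' k I₀ I₁ h₀ _ hdom

lemma mul_totPos_right {n : ℕ} {A B : Matrix (Fin n) (Fin n) ℝ}
    (hA : UnitLower A) (hB : UnitLower B) (hA' : TotNonneg A) (hB' : TotPos B) :
    TotPos (A * B) := by
  intro k I₀ I₁ h₀ h₁ hdom
  rw [minorDet_mul]
  refine Finset.sum_pos' (fun J _ => term_nonneg hA hB hA' (totPos_totNonneg hB') h₀ h₁ J.1 _)
    ⟨⟨I₀, mem_powersetCard_univ.2 h₀⟩, Finset.mem_attach _ _, ?_⟩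
  have h2 : minorDet A I₀ I₀ h₀ (mem_powersetCard_univ.1 (mem_powersetCard_univ.2 h₀)) = 1 :=
    minorDet_self hA I₀ h₀
  rw [h2, one_mul]
  exact hB' k I₀ I₁ _ h₁ hdom

end CBaux

/-- If `L₀ ∈ Pos_η` and `L₁ ∈ closure(Pos_η)` then `L₀L₁, L₁L₀ ∈ Pos_η`; if both lie
in the closure, so does `L₀L₁`. -/
theorem stmt_15 (n : ℕ) (L₀ L₁ : Matrix (Fin (n + 1)) (Fin (n + 1)) ℝ)
    (hL₀ : UnitLower L₀) (hL₁ : UnitLower L₁) :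
    (TotPos L₀ → TotNonneg L₁ → TotPos (L₀ * L₁) ∧ TotPos (L₁ * L₀)) ∧
      (TotNonneg L₀ → TotNonneg L₁ → TotNonneg (L₀ * L₁)) := by
  refine ⟨fun h0 h1 => ⟨CBaux.mul_totPos_left hL₀ hL₁ h0 h1,
    CBaux.mul_totPos_right hL₁ hL₀ h1 h0⟩,
    fun h0 h1 => CBaux.mul_totNonneg hL₀ hL₁ h0 h1⟩
end

section
/- In the group Lo¹ of unipotent lower triangular real (n+1)×(n+1) matrices, define L₀ ≤ L₁ iff L₀⁻¹L₁ has all minors det((L₀⁻¹L₁)_{I₀,I₁}) ≥ 0 for I₀ ≥ I₁, and L₀ ≪ L₁ iff these minors are all > 0 (total positivity). Then: L₀ ≤ L₁ ≤ L₂ implies L₀ ≤ L₂, and L₀ ≤ L₁ ≪ L₂ implies L₀ ≪ L₂. -/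
open Finset Matrix Equiv

section Aux
variable {m k : ℕ}

/-- lower triangular -/
def LowerT {m : ℕ} (M : Matrix (Fin m) (Fin m) ℝ) : Prop := ∀ i j : Fin m, i < j → M i j = 0

lemma lowerT_iff_blockTriangular {M : Matrix (Fin m) (Fin m) ℝ} :
    LowerT M ↔ M.BlockTriangular OrderDual.toDual := by
  constructor
  · intro h i j hij; exact h i j hij
  · intro h i j hij; exact h hij

lemma UnitLower.lowerT {M : Matrix (Fin m) (Fin m) ℝ} (h : UnitLower M) : LowerT M := h.2

lemma UnitLower.det_eq_one {M : Matrix (Fin m) (Fin m) ℝ} (h : UnitLower M) : M.det = 1 := by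
  rw [Matrix.det_of_lowerTriangular M (lowerT_iff_blockTriangular.1 h.2)]
  simp [h.1]

lemma UnitLower.mul {M N : Matrix (Fin m) (Fin m) ℝ} (hM : UnitLower M) (hN : UnitLower N) :
    UnitLower (M * N) := by
  constructor
  · intro i
    rw [Matrix.mul_apply]
    rw [Finset.sum_eq_single i]
    · rw [hM.1, hN.1, one_mul]
    · intro b _ hb
      rcases lt_or_gt_of_ne hb with hb' | hb'
      · rw [hN.2 _ _ hb', mul_zero]
      · rw [hM.2 _ _ hb', zero_mul]
    · simp
  · intro i j hij
    rw [Matrix.mul_apply]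
    apply Finset.sum_eq_zero
    intro b _
    rcases le_or_gt b i with hb | hb
    · rw [hN.2 _ _ (lt_of_le_of_lt hb hij), mul_zero]
    · rw [hM.2 _ _ hb, zero_mul]

lemma UnitLower.inv {M : Matrix (Fin m) (Fin m) ℝ} (h : UnitLower M) : UnitLower M⁻¹ := by
  have hdet : IsUnit M.det := by rw [h.det_eq_one]; exact isUnit_one
  have : Invertible M := M.invertibleOfIsUnitDet hdet
  have hlow : LowerT M⁻¹ := by
    rw [lowerT_iff_blockTriangular]
    exact Matrix.blockTriangular_inv_of_blockTriangular (lowerT_iff_blockTriangular.1 h.2)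
  refine ⟨?_, hlow⟩
  intro i
  have h1 : (M⁻¹ * M) i i = 1 := by rw [Matrix.nonsing_inv_mul M hdet]; simp
  rw [Matrix.mul_apply] at h1
  rw [Finset.sum_eq_single i] at h1
  · rwa [h.1, mul_one] at h1
  · intro b _ hb
    rcases lt_or_gt_of_ne hb with hb' | hb'
    · rw [h.2 _ _ hb', mul_zero]
    · rw [hlow _ _ hb', zero_mul]
  · simp

end Aux
section Minors
open Finset Matrix Equiv
variable {m k : ℕ}

lemma lowerT_submatrix_det_zero {M : Matrix (Fin m) (Fin m) ℝ} (hM : LowerT M)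
    {g₀ g₁ : Fin k → Fin m} (h₀ : Monotone g₀) (h₁ : Monotone g₁)
    {r : Fin k} (hr : g₀ r < g₁ r) : (M.submatrix g₀ g₁).det = 0 := by
  rw [Matrix.det_apply']
  apply Finset.sum_eq_zero
  intro σ _
  have : ∃ i : Fin k, r ≤ i ∧ σ i ≤ r := by
    by_contra hcon
    push_neg at hcon
    have hmaps : ∀ i ∈ Finset.Ici r, σ i ∈ Finset.Ioi r := by
      intro i hi
      simp only [Finset.mem_Ici] at hi
      simp only [Finset.mem_Ioi]
      exact hcon i hi
    have hcard : (Finset.Ici r).card ≤ (Finset.Ioi r).card :=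
      Finset.card_le_card_of_injOn σ hmaps (σ.injective.injOn)
    have hss : Finset.Ioi r ⊂ Finset.Ici r := by
      rw [Finset.ssubset_iff_of_subset (fun x hx => Finset.mem_Ici.2 (le_of_lt (Finset.mem_Ioi.1 hx)))]
      exact ⟨r, Finset.mem_Ici.2 le_rfl, by simp⟩
    exact absurd hcard (not_le.2 (Finset.card_lt_card hss))
  obtain ⟨i, hri, hsi⟩ := this
  rw [Finset.prod_eq_zero (Finset.mem_univ i), mul_zero]
  exact hM _ _ (lt_of_le_of_lt (h₀ (hsi)) (lt_of_lt_of_le hr (h₁ hri)))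

lemma unitLower_submatrix_det_one {M : Matrix (Fin m) (Fin m) ℝ} (hM : UnitLower M)
    {g : Fin k → Fin m} (hg : StrictMono g) : (M.submatrix g g).det = 1 := by
  have : (M.submatrix g g).BlockTriangular OrderDual.toDual := by
    intro i j hij
    exact hM.2 _ _ (hg hij)
  rw [Matrix.det_of_lowerTriangular _ this]
  simp [hM.1]

end Minors
section CB
open Finset Matrix Equiv
variable {m k : ℕ}

lemma image_card_of_inj {p : Fin k → Fin m} (hp : Function.Injective p) :
    (Finset.image p Finset.univ).card = k := by
  rw [Finset.card_image_of_injective _ hp, Finset.card_univ, Fintype.card_fin]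

/-- sorted version of an injective tuple -/
noncomputable def sortOf (p : Fin k → Fin m) (hp : Function.Injective p) : Fin k → Fin m :=
  (Finset.image p Finset.univ).orderEmbOfFin (image_card_of_inj hp)

lemma sortOf_strictMono (p : Fin k → Fin m) (hp : Function.Injective p) :
    StrictMono (sortOf p hp) :=
  ((Finset.image p Finset.univ).orderEmbOfFin (image_card_of_inj hp)).strictMono

/-- the permutation relating a tuple to its sorted version -/
noncomputable def permOf (p : Fin k → Fin m) (hp : Function.Injective p) :
    Equiv.Perm (Fin k) :=
  Equiv.ofBijective
    (fun i => ((Finset.image p Finset.univ).orderIsoOfFin (image_card_of_inj hp)).symm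
      ⟨p i, by simp⟩)
    (Finite.injective_iff_bijective.1 (fun a b hab => by
      have := congrArg (fun z => (((Finset.image p Finset.univ).orderIsoOfFin
        (image_card_of_inj hp)) z : Fin m)) hab
      simp only [OrderIso.apply_symm_apply] at this
      exact hp this))

lemma sortOf_permOf (p : Fin k → Fin m) (hp : Function.Injective p) (i : Fin k) :
    sortOf p hp (permOf p hp i) = p i := by
  rw [sortOf, permOf, ← Finset.coe_orderIsoOfFin_apply]
  simp [Equiv.ofBijective_apply]

lemma sortOf_comp (g : Fin k → Fin m) (hg : StrictMono g) (σ : Equiv.Perm (Fin k)) :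
    sortOf (g ∘ σ) (hg.injective.comp σ.injective) = g := by
  symm
  exact Finset.orderEmbOfFin_unique _ (fun x => Finset.mem_image.2 ⟨σ.symm x, Finset.mem_univ _,
    by simp⟩) hg

lemma permOf_comp (g : Fin k → Fin m) (hg : StrictMono g) (σ : Equiv.Perm (Fin k)) :
    permOf (g ∘ σ) (hg.injective.comp σ.injective) = σ := by
  refine Equiv.ext fun i => ?_
  rw [permOf, Equiv.ofBijective_apply]
  rw [OrderIso.symm_apply_eq]
  apply Subtype.ext
  rw [Finset.coe_orderIsoOfFin_apply]
  exact (congrFun (sortOf_comp g hg σ) (σ i)).symm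

lemma cauchy_binet (A : Matrix (Fin k) (Fin m) ℝ) (B : Matrix (Fin m) (Fin k) ℝ) :
    (A * B).det = ∑ g ∈ Finset.univ.filter (fun g : Fin k → Fin m => StrictMono g),
      (A.submatrix id g).det * (B.submatrix g id).det := by
  classical
  have step1 : (A * B).det
      = ∑ p : Fin k → Fin m, (A.submatrix id p).det * ∏ i, B (p i) i := by
    calc (A * B).det
        = ∑ p : Fin k → Fin m, ∑ σ : Equiv.Perm (Fin k),
            (Equiv.Perm.sign σ : ℝ) * ∏ i, A (σ i) (p i) * B (p i) i := by
          simp only [Matrix.det_apply', Matrix.mul_apply, Finset.prod_univ_sum,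
            Finset.mul_sum, Fintype.piFinset_univ]
          rw [Finset.sum_comm]
      _ = _ := by
          refine Finset.sum_congr rfl fun p _ => ?_
          rw [Matrix.det_apply', Finset.sum_mul]
          refine Finset.sum_congr rfl fun σ _ => ?_
          simp only [Finset.prod_mul_distrib, Matrix.submatrix_apply, id_eq]
          ring
  rw [step1]
  have step2 : ∑ p : Fin k → Fin m, (A.submatrix id p).det * ∏ i, B (p i) i
      = ∑ p ∈ Finset.univ.filter (fun p : Fin k → Fin m => Function.Injective p),
          (A.submatrix id p).det * ∏ i, B (p i) i := by
    refine (Finset.sum_subset (Finset.filter_subset _ _) fun p _ hp => ?_).symm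
    simp only [Finset.mem_filter, Finset.mem_univ, true_and] at hp
    rw [Function.not_injective_iff] at hp
    obtain ⟨i, j, hpij, hij⟩ := hp
    rw [Matrix.det_zero_of_column_eq hij (fun r => by simp [hpij]), zero_mul]
  rw [step2]
  rw [show ∑ g ∈ Finset.univ.filter (fun g : Fin k → Fin m => StrictMono g),
      (A.submatrix id g).det * (B.submatrix g id).det
    = ∑ x ∈ (Finset.univ.filter (fun g : Fin k → Fin m => StrictMono g)) ×ˢ
        (Finset.univ : Finset (Equiv.Perm (Fin k))),
        ((Equiv.Perm.sign x.2 : ℝ) * (A.submatrix id x.1).det) * ∏ i, B (x.1 (x.2 i)) i from ?_]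
  · refine Finset.sum_bij'
      (fun p hp => (sortOf p (by simpa using (Finset.mem_filter.1 hp).2),
                    permOf p (by simpa using (Finset.mem_filter.1 hp).2)))
      (fun x _ => x.1 ∘ x.2) ?_ ?_ ?_ ?_ ?_
    · intro p hp
      simp only [Finset.mem_product, Finset.mem_filter, Finset.mem_univ, true_and, and_true]
      exact sortOf_strictMono p _
    · intro x hx
      simp only [Finset.mem_product, Finset.mem_filter, Finset.mem_univ, true_and, and_true] at hx
      simp only [Finset.mem_filter, Finset.mem_univ, true_and]
      exact hx.injective.comp x.2.injective
    · intro p hp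
      funext i
      exact sortOf_permOf p (by simpa using (Finset.mem_filter.1 hp).2) i
    · intro x hx
      simp only [Finset.mem_product, Finset.mem_filter, Finset.mem_univ, true_and, and_true] at hx
      have h1 := sortOf_comp x.1 hx x.2
      have h2 := permOf_comp x.1 hx x.2
      exact Prod.ext h1 h2
    · intro p hp
      have hpi : Function.Injective p := by simpa using (Finset.mem_filter.1 hp).2
      have hps : p = sortOf p hpi ∘ permOf p hpi := funext (fun i => (sortOf_permOf p hpi i).symm)
      have : (A.submatrix id p).det
          = ((A.submatrix id (sortOf p hpi)).submatrix id (permOf p hpi)).det := by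
        rw [Matrix.submatrix_submatrix]
        conv_lhs => rw [hps]
        rfl
      rw [this, Matrix.det_permute']
      have hprod : ∀ i, B (p i) i = B (sortOf p hpi (permOf p hpi i)) i := fun i => by
        rw [sortOf_permOf]
      simp only [← hprod]
  · rw [Finset.sum_product]
    refine Finset.sum_congr rfl fun g hg => ?_
    rw [Matrix.det_apply' (B.submatrix g id), Finset.mul_sum]
    refine Finset.sum_congr rfl fun σ _ => ?_
    simp only [Matrix.submatrix_apply, id_eq]
    ring
end CB
section Main
open Finset Matrix Equiv
variable {m : ℕ}

lemma orderIso_image_apply {k : ℕ} (g : Fin k → Fin m) (hg : StrictMono g) (a : Fin k) :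
    ((Finset.image g Finset.univ).orderIsoOfFin (image_card_of_inj hg.injective) a : Fin m)
      = g a := by
  rw [Finset.coe_orderIsoOfFin_apply]
  exact (congrFun (Finset.orderEmbOfFin_unique (image_card_of_inj hg.injective)
    (fun x => Finset.mem_image.2 ⟨x, Finset.mem_univ _, rfl⟩) hg) a).symm

lemma orderIso_strictMono {k : ℕ} (I : Finset (Fin m)) (h : I.card = k) :
    StrictMono (fun a : Fin k => (I.orderIsoOfFin h a : Fin m)) := by
  have : (fun a : Fin k => (I.orderIsoOfFin h a : Fin m)) = I.orderEmbOfFin h := by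
    funext a; exact Finset.coe_orderIsoOfFin_apply I h a
  rw [this]
  exact (I.orderEmbOfFin h).strictMono

lemma minorDet_eq {k : ℕ} (M : Matrix (Fin m) (Fin m) ℝ) (I₀ I₁ : Finset (Fin m))
    (h₀ : I₀.card = k) (h₁ : I₁.card = k) :
    minorDet M I₀ I₁ h₀ h₁ = (M.submatrix (fun a : Fin k => (I₀.orderIsoOfFin h₀ a : Fin m))
      (fun b : Fin k => (I₁.orderIsoOfFin h₁ b : Fin m))).det := rfl

lemma totNonneg_iff {M : Matrix (Fin m) (Fin m) ℝ} :
    TotNonneg M ↔ ∀ (k : ℕ) (g₀ g₁ : Fin k → Fin m), StrictMono g₀ → StrictMono g₁ →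
      (∀ r, g₁ r ≤ g₀ r) → 0 ≤ (M.submatrix g₀ g₁).det := by
  constructor
  · intro h k g₀ g₁ hg₀ hg₁ hdom
    have := h k (Finset.image g₀ Finset.univ) (Finset.image g₁ Finset.univ)
      (image_card_of_inj hg₀.injective) (image_card_of_inj hg₁.injective)
      (fun r => by rw [orderIso_image_apply g₀ hg₀, orderIso_image_apply g₁ hg₁]; exact hdom r)
    rwa [minorDet_eq, show (fun a : Fin k =>
        ((Finset.image g₀ Finset.univ).orderIsoOfFin (image_card_of_inj hg₀.injective) a : Fin m))
        = g₀ from funext (orderIso_image_apply g₀ hg₀), show (fun a : Fin k =>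
        ((Finset.image g₁ Finset.univ).orderIsoOfFin (image_card_of_inj hg₁.injective) a : Fin m))
        = g₁ from funext (orderIso_image_apply g₁ hg₁)] at this
  · intro h k I₀ I₁ h₀ h₁ hdom
    rw [minorDet_eq]
    exact h k _ _ (orderIso_strictMono I₀ h₀) (orderIso_strictMono I₁ h₁) hdom

lemma totPos_iff {M : Matrix (Fin m) (Fin m) ℝ} :
    TotPos M ↔ ∀ (k : ℕ) (g₀ g₁ : Fin k → Fin m), StrictMono g₀ → StrictMono g₁ →
      (∀ r, g₁ r ≤ g₀ r) → 0 < (M.submatrix g₀ g₁).det := by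
  constructor
  · intro h k g₀ g₁ hg₀ hg₁ hdom
    have := h k (Finset.image g₀ Finset.univ) (Finset.image g₁ Finset.univ)
      (image_card_of_inj hg₀.injective) (image_card_of_inj hg₁.injective)
      (fun r => by rw [orderIso_image_apply g₀ hg₀, orderIso_image_apply g₁ hg₁]; exact hdom r)
    rwa [minorDet_eq, show (fun a : Fin k =>
        ((Finset.image g₀ Finset.univ).orderIsoOfFin (image_card_of_inj hg₀.injective) a : Fin m))
        = g₀ from funext (orderIso_image_apply g₀ hg₀), show (fun a : Fin k =>
        ((Finset.image g₁ Finset.univ).orderIsoOfFin (image_card_of_inj hg₁.injective) a : Fin m))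
        = g₁ from funext (orderIso_image_apply g₁ hg₁)] at this
  · intro h k I₀ I₁ h₀ h₁ hdom
    rw [minorDet_eq]
    exact h k _ _ (orderIso_strictMono I₀ h₀) (orderIso_strictMono I₁ h₁) hdom

lemma submatrix_mul_split {k : ℕ} (A B : Matrix (Fin m) (Fin m) ℝ) (g₀ g₁ : Fin k → Fin m) :
    (A * B).submatrix g₀ g₁ = (A.submatrix g₀ id) * (B.submatrix id g₁) := by
  ext i j
  simp [Matrix.mul_apply]

/-- product of a unit lower totally nonnegative with a lower triangular matrix -/
lemma key_mul {A B : Matrix (Fin m) (Fin m) ℝ} (hA : UnitLower A) (hB : LowerT B)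
    (hAnn : TotNonneg A) :
    (TotNonneg B → TotNonneg (A * B)) ∧ (TotPos B → TotPos (A * B)) := by
  classical
  have hApos : ∀ (k : ℕ) (g₀ g : Fin k → Fin m), StrictMono g₀ → StrictMono g →
      0 ≤ (A.submatrix g₀ g).det := by
    intro k g₀ g hg₀ hg
    by_cases hd : ∀ r, g r ≤ g₀ r
    · exact totNonneg_iff.1 hAnn k g₀ g hg₀ hg hd
    · push_neg at hd
      obtain ⟨r, hr⟩ := hd
      rw [lowerT_submatrix_det_zero hA.2 hg₀.monotone hg.monotone hr]
  constructor
  · -- nonneg case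
    intro hBnn
    rw [totNonneg_iff]
    intro k g₀ g₁ hg₀ hg₁ hdom
    rw [submatrix_mul_split, cauchy_binet]
    apply Finset.sum_nonneg
    intro g hgmem
    have hg : StrictMono g := by simpa using (Finset.mem_filter.1 hgmem).2
    simp only [Matrix.submatrix_submatrix, Function.comp_id, Function.id_comp]
    by_cases hd : ∀ r, g₁ r ≤ g r
    · exact mul_nonneg (hApos k g₀ g hg₀ hg)
        (totNonneg_iff.1 hBnn k g g₁ hg hg₁ hd)
    · push_neg at hd
      obtain ⟨r, hr⟩ := hd
      rw [lowerT_submatrix_det_zero hB hg.monotone hg₁.monotone hr, mul_zero]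
  · -- pos case
    intro hBpos
    rw [totPos_iff]
    intro k g₀ g₁ hg₀ hg₁ hdom
    rw [submatrix_mul_split, cauchy_binet]
    apply Finset.sum_pos'
    · intro g hgmem
      have hg : StrictMono g := by simpa using (Finset.mem_filter.1 hgmem).2
      simp only [Matrix.submatrix_submatrix, Function.comp_id, Function.id_comp]
      by_cases hd : ∀ r, g₁ r ≤ g r
      · exact mul_nonneg (hApos k g₀ g hg₀ hg)
          (le_of_lt (totPos_iff.1 hBpos k g g₁ hg hg₁ hd))
      · push_neg at hd
        obtain ⟨r, hr⟩ := hd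
        rw [lowerT_submatrix_det_zero hB hg.monotone hg₁.monotone hr, mul_zero]
    · refine ⟨g₀, Finset.mem_filter.2 ⟨Finset.mem_univ _, hg₀⟩, ?_⟩
      simp only [Matrix.submatrix_submatrix, Function.comp_id, Function.id_comp]
      rw [unitLower_submatrix_det_one hA hg₀, one_mul]
      exact totPos_iff.1 hBpos k g₀ g₁ hg₀ hg₁ hdom

end Main

/-- With `L₀ ≤ L₁` iff `L₀⁻¹L₁ ∈ closure(Pos_η)` and `L₀ ≪ L₁` iff `L₀⁻¹L₁ ∈ Pos_η`:
these relations are transitive, and `L₀ ≤ L₁ ≪ L₂` implies `L₀ ≪ L₂`. -/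
theorem stmt_16 (n : ℕ) (L₀ L₁ L₂ : Matrix (Fin (n + 1)) (Fin (n + 1)) ℝ)
    (h₀ : UnitLower L₀) (h₁ : UnitLower L₁) (h₂ : UnitLower L₂) :
    (TotNonneg (L₀⁻¹ * L₁) → TotNonneg (L₁⁻¹ * L₂) → TotNonneg (L₀⁻¹ * L₂)) ∧
      (TotNonneg (L₀⁻¹ * L₁) → TotPos (L₁⁻¹ * L₂) → TotPos (L₀⁻¹ * L₂)) := by
  have hA : UnitLower (L₀⁻¹ * L₁) := h₀.inv.mul h₁
  have hB : LowerT (L₁⁻¹ * L₂) := (h₁.inv.mul h₂).2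
  have hdet : IsUnit L₁.det := by rw [h₁.det_eq_one]; exact isUnit_one
  have hprod : L₀⁻¹ * L₂ = (L₀⁻¹ * L₁) * (L₁⁻¹ * L₂) := by
    rw [Matrix.mul_assoc, ← Matrix.mul_assoc L₁, Matrix.mul_nonsing_inv _ hdet,
      Matrix.one_mul]
  constructor
  · intro hAB hBC
    rw [hprod]
    exact (key_mul hA hB hAB).1 hBC
  · intro hAB hBC
    rw [hprod]
    exact (key_mul hA hB hAB).2 hBC
end

section
/- The identity λ_i(t₁)·λ_{i+1}(t₂)·λ_i(t₃) = λ_{i+1}(t₂t₃/(t₁+t₃))·λ_i(t₁+t₃)·λ_{i+1}(t₁t₂/(t₁+t₃)) holds for all real t₁, t₂, t₃ with t₁ + t₃ ≠ 0, where λ_i(t) = exp(t·𝔩_i) = I + t·𝔩_i and 𝔩_i is the (n+1)×(n+1) matrix with a single nonzero entry (𝔩_i)_{i+1,i} = 1. -/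
/-- The elementary nilpotent lower triangular matrix `𝔩_k` with a single nonzero entry
`(𝔩_k)_{k+1,k} = 1` (0-indexed generator `k`). -/
def lMat (n k : ℕ) : Matrix (Fin (n + 1)) (Fin (n + 1)) ℝ :=
  Matrix.of fun r c => if (r : ℕ) = k + 1 ∧ (c : ℕ) = k then 1 else 0

/-- `λ_k(t) = exp(t·𝔩_k) = I + t·𝔩_k` (since `𝔩_k² = 0`). -/
def lam (n k : ℕ) (t : ℝ) : Matrix (Fin (n + 1)) (Fin (n + 1)) ℝ :=
  1 + t • lMat n k

lemma lMat_mul_eq_zero (n j k : ℕ) (h : j ≠ k + 1) : lMat n j * lMat n k = 0 := by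
  ext r c
  simp only [Matrix.mul_apply, lMat, Matrix.of_apply, Matrix.zero_apply]
  apply Finset.sum_eq_zero
  intro m _
  by_cases h1 : (r : ℕ) = j + 1 ∧ (m : ℕ) = j
  · by_cases h2 : (m : ℕ) = k + 1 ∧ (c : ℕ) = k
    · exact absurd (h1.2 ▸ h2.1) h
    · simp [h2]
  · simp [h1]

/-- The braid-move transition identity between parameterizations of totally positive
matrices: `λ_i(t₁)λ_{i+1}(t₂)λ_i(t₃) =
λ_{i+1}(t₂t₃/(t₁+t₃))·λ_i(t₁+t₃)·λ_{i+1}(t₁t₂/(t₁+t₃))`. -/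
theorem stmt_17 (n i : ℕ) (t₁ t₂ t₃ : ℝ) (h : t₁ + t₃ ≠ 0) :
    lam n i t₁ * lam n (i + 1) t₂ * lam n i t₃ =
      lam n (i + 1) (t₂ * t₃ / (t₁ + t₃)) * lam n i (t₁ + t₃) *
        lam n (i + 1) (t₁ * t₂ / (t₁ + t₃)) := by
  set A := lMat n i with hA
  set B := lMat n (i + 1) with hB
  have hAA : A * A = 0 := lMat_mul_eq_zero n i i (by omega)
  have hAB : A * B = 0 := lMat_mul_eq_zero n i (i + 1) (by omega)
  have hBB : B * B = 0 := lMat_mul_eq_zero n (i + 1) (i + 1) (by omega)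
  have hBAB : B * A * B = 0 := by rw [mul_assoc, hAB, mul_zero]
  have e1 : ∀ a b c : ℝ, (1 + a • A) * (1 + b • B) * (1 + c • A)
      = 1 + (a + c) • A + b • B + (b * c) • (B * A) := by
    intro a b c
    simp only [mul_add, add_mul, one_mul, mul_one, Matrix.smul_mul, Matrix.mul_smul,
      hAA, hAB, smul_smul, smul_zero, add_smul, zero_mul, mul_zero, mul_comm c b]
    abel
  have e2 : ∀ a s b : ℝ, (1 + a • B) * (1 + s • A) * (1 + b • B)
      = 1 + s • A + (a + b) • B + (a * s) • (B * A) := by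
    intro a s b
    simp only [mul_add, add_mul, one_mul, mul_one, Matrix.smul_mul, Matrix.mul_smul,
      hBB, hAB, hBAB, smul_smul, smul_zero, add_smul, zero_mul, mul_zero, mul_comm s a]
    abel
  show (1 + t₁ • A) * (1 + t₂ • B) * (1 + t₃ • A) = _
  rw [e1]
  show _ = (1 + _ • B) * (1 + _ • A) * (1 + _ • B)
  rw [e2]
  have s1 : t₂ * t₃ / (t₁ + t₃) + t₁ * t₂ / (t₁ + t₃) = t₂ := by field_simp; ring
  have s2 : t₂ * t₃ / (t₁ + t₃) * (t₁ + t₃) = t₂ * t₃ := div_mul_cancel₀ _ h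
  rw [s1, s2]
end
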